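/- Let q₁, q₂ ∈ ℂ ∖ {0} and set q = q₁ q₂; assume q ∉ p^ℤ (equivalently ϑ(q) ≠ 0). Then ζ^E(x) = ϑ(x q₁)ϑ(x q₂)/(ϑ(x)ϑ(x q)) has residue −ϑ(q₁)ϑ(q₂)/ϑ(q) at x = 1: the function x ↦ (x − 1)·ζ^E(x) tends to −ϑ(q₁)ϑ(q₂)/ϑ(q) as x tends to 1 with x ≠ 1. -/

import Mathlib

open Filter Topology

/-! Write `ϑ(x) = (1 - x) P(x)`. On every annulus `R⁻¹ < |z| < R` the factors of `P` are
`1 + O(|p|ˢ)` uniformly, so the product converges locally uniformly on `ℂ ∖ {0}`; hence `P` is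
continuous there, `P(1) = 1`, and `P(a) ≠ 0` whenever no factor vanishes; so `q ∉ p^ℤ` gives
`ϑ(q) ≠ 0`. For `x ≠ 1` the factor `1 - x` cancels:
`(x - 1) ζ^E(x) = -ϑ(xq₁)ϑ(xq₂) / (P(x) ϑ(xq))`, and the right side is continuous at `x = 1`. -/

/-- The Jacobi theta function
`ϑ(z) = (1 − z) · ∏_{s=1}^∞ (1 − p^s z)(1 − p^s z⁻¹)/(1 − p^s)^2`. -/
noncomputable def jTheta (p z : ℂ) : ℂ :=
  (1 - z) * ∏' s : ℕ,
    (1 - p ^ (s + 1) * z) * (1 - p ^ (s + 1) * z⁻¹) / (1 - p ^ (s + 1)) ^ 2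

/-- `ζ^E(x) = ϑ(xq₁)ϑ(xq₂)/(ϑ(x)ϑ(xq₁q₂))`. -/
noncomputable def zetaE (p q₁ q₂ x : ℂ) : ℂ :=
  jTheta p (x * q₁) * jTheta p (x * q₂) / (jTheta p x * jTheta p (x * (q₁ * q₂)))

lemma norm_one_sub_mul_one_sub_div_sq_sub_one_le {u v w : ℂ} {r : ℝ} (hu : ‖u‖ ≤ r)
    (hv : ‖v‖ ≤ r) (hw : ‖w‖ ≤ r) (hr : r ≤ 1 / 2) :
    ‖(1 - u) * (1 - v) / (1 - w) ^ 2 - 1‖ ≤ 20 * r := by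
  have hr0 : 0 ≤ r := (norm_nonneg u).trans hu
  have hden : 1 / 2 ≤ ‖1 - w‖ := by
    linarith [norm_sub_norm_le (1 : ℂ) w, norm_one (α := ℂ)]
  have hw1 : 1 - w ≠ 0 := norm_pos_iff.mp (by linarith)
  have hnum : ‖(1 - u) * (1 - v) - (1 - w) ^ 2‖ ≤ 5 * r := by
    have h₁ := norm_add_le (2 * w - u - v) (u * v - w * w)
    have h₂ := norm_sub_le (2 * w - u) v
    have h₃ := norm_sub_le (2 * w) u
    have h₄ := norm_sub_le (u * v) (w * w)
    simp only [norm_mul, Complex.norm_ofNat] at h₃ h₄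
    rw [show (1 - u) * (1 - v) - (1 - w) ^ 2 = 2 * w - u - v + (u * v - w * w) by ring]
    nlinarith [mul_le_mul hu hv (norm_nonneg v) hr0, mul_le_mul hw hw (norm_nonneg w) hr0]
  calc ‖(1 - u) * (1 - v) / (1 - w) ^ 2 - 1‖
      = ‖(1 - u) * (1 - v) - (1 - w) ^ 2‖ / ‖1 - w‖ ^ 2 := by
        rw [div_sub_one (pow_ne_zero 2 hw1), norm_div, norm_pow]
    _ ≤ 5 * r / (1 / 2) ^ 2 := by gcongr
    _ = 20 * r := by ring

noncomputable def thetaFactor (p z : ℂ) (s : ℕ) : ℂ :=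
  (1 - p ^ (s + 1) * z) * (1 - p ^ (s + 1) * z⁻¹) / (1 - p ^ (s + 1)) ^ 2

noncomputable def thetaProd (p z : ℂ) : ℂ := ∏' s, thetaFactor p z s

lemma jTheta_eq_mul_thetaProd (p z : ℂ) : jTheta p z = (1 - z) * thetaProd p z := rfl

section ThetaProduct

variable {p : ℂ}

lemma norm_thetaFactor_sub_one_le {z : ℂ} {R : ℝ} {s : ℕ} (hR : 1 ≤ R) (hz : ‖z‖ ≤ R)
    (hz' : ‖z⁻¹‖ ≤ R) (hs : R * ‖p‖ ^ (s + 1) ≤ 1 / 2) :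
    ‖thetaFactor p z s - 1‖ ≤ 20 * (R * ‖p‖ ^ (s + 1)) := by
  have hmul : ∀ {c : ℂ}, ‖c‖ ≤ R → ‖p ^ (s + 1) * c‖ ≤ R * ‖p‖ ^ (s + 1) := fun hc ↦ by
    rw [norm_mul, norm_pow, mul_comm]; gcongr
  refine norm_one_sub_mul_one_sub_div_sq_sub_one_le (hmul hz) (hmul hz') ?_ hs
  simpa using hmul (c := 1) (by simpa using hR)

lemma eventually_norm_thetaFactor_sub_one_le (hp : ‖p‖ < 1) {R : ℝ} (hR : 1 ≤ R) :
    ∀ᶠ s in atTop, ∀ z : ℂ, ‖z‖ ≤ R → ‖z⁻¹‖ ≤ R →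
      ‖thetaFactor p z s - 1‖ ≤ 20 * (R * ‖p‖ ^ (s + 1)) := by
  have hlim : Tendsto (fun s ↦ R * ‖p‖ ^ (s + 1)) atTop (𝓝 0) := by
    simpa using ((tendsto_pow_atTop_nhds_zero_of_lt_one (norm_nonneg p) hp).comp
      (tendsto_add_atTop_nat 1)).const_mul R
  filter_upwards [hlim.eventually_le_const one_half_pos] with _ hs z hz hz'
    using norm_thetaFactor_sub_one_le hR hz hz' hs

lemma summable_theta_bound (hp : ‖p‖ < 1) (R : ℝ) :
    Summable fun s : ℕ ↦ 20 * (R * ‖p‖ ^ (s + 1)) :=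
  (((summable_nat_add_iff 1).mpr (summable_geometric_of_lt_one (norm_nonneg p) hp)).mul_left
    R).mul_left 20

lemma continuousOn_thetaFactor (s : ℕ) : ContinuousOn (thetaFactor p · s) {0}ᶜ := by
  have : ∀ z ∈ ({0}ᶜ : Set ℂ), z ≠ 0 := fun _ ↦ id
  unfold thetaFactor
  fun_prop (disch := assumption)

lemma preimage_norm_Ioo_inv_subset_compl_zero (R : ℝ) :
    (norm : ℂ → ℝ) ⁻¹' Set.Ioo R⁻¹ R ⊆ {0}ᶜ := by
  rintro z ⟨h₁, h₂⟩ rfl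
  rw [norm_zero] at h₁ h₂
  exact (inv_pos.mpr h₂).not_gt h₁

lemma hasProdLocallyUniformlyOn_thetaFactor (hp : ‖p‖ < 1) {R : ℝ} (hR : 1 ≤ R) :
    HasProdLocallyUniformlyOn (fun s z ↦ thetaFactor p z s) (thetaProd p)
      ((norm : ℂ → ℝ) ⁻¹' Set.Ioo R⁻¹ R) := by
  have hbound : ∀ᶠ s in atTop, ∀ z ∈ (norm : ℂ → ℝ) ⁻¹' Set.Ioo R⁻¹ R,
      ‖thetaFactor p z s - 1‖ ≤ 20 * (R * ‖p‖ ^ (s + 1)) := by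
    filter_upwards [eventually_norm_thetaFactor_sub_one_le hp hR] with s hs z hz
    refine hs z hz.2.le ?_
    rw [norm_inv]
    exact inv_le_of_inv_le₀ (by positivity) hz.1.le
  have h := Summable.hasProdLocallyUniformlyOn_nat_one_add (isOpen_Ioo.preimage continuous_norm)
    (summable_theta_bound hp R) hbound fun s ↦
      ((continuousOn_thetaFactor s).mono (preimage_norm_Ioo_inv_subset_compl_zero R)).sub
        continuousOn_const
  simp only [add_sub_cancel] at h
  exact h

lemma continuousAt_thetaProd (hp : ‖p‖ < 1) {a : ℂ} (ha : a ≠ 0) :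
    ContinuousAt (thetaProd p) a := by
  have ha' : 0 < ‖a‖ := norm_pos_iff.mpr ha
  set R := ‖a‖ + ‖a‖⁻¹ + 1
  have hR : 1 ≤ R := by have := inv_pos.mpr ha'; linarith
  have hmem : (norm : ℂ → ℝ) ⁻¹' Set.Ioo R⁻¹ R ∈ 𝓝 a := by
    refine (isOpen_Ioo.preimage continuous_norm).mem_nhds ⟨inv_lt_of_inv_lt₀ ha' ?_, ?_⟩ <;>
      linarith [inv_pos.mpr ha']
  refine ((hasProdLocallyUniformlyOn_thetaFactor hp hR).continuousOn
    (Eventually.frequently (Eventually.of_forall fun S ↦ ?_))).continuousAt hmem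
  exact (continuousOn_finsetProd S fun s _ ↦ continuousOn_thetaFactor s).mono
    (preimage_norm_Ioo_inv_subset_compl_zero R)

lemma thetaProd_ne_zero (hp : ‖p‖ < 1) {a : ℂ} (ha : ∀ s, thetaFactor p a s ≠ 0) :
    thetaProd p a ≠ 0 := by
  set R := ‖a‖ + ‖a⁻¹‖ + 1
  have hR : 1 ≤ R := by linarith [norm_nonneg a, norm_nonneg a⁻¹]
  have hsum : Summable fun s ↦ ‖thetaFactor p a s - 1‖ := by
    refine (summable_theta_bound hp R).of_norm_bounded_eventually_nat ?_
    filter_upwards [eventually_norm_thetaFactor_sub_one_le hp hR] with s hs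
    rw [norm_norm]
    exact hs a (by linarith [norm_nonneg a⁻¹]) (by linarith [norm_nonneg a])
  simpa [thetaProd] using tprod_one_add_ne_zero_of_summable (by simpa using ha) hsum

lemma one_sub_pow_succ_ne_zero (hp : ‖p‖ < 1) (s : ℕ) : 1 - p ^ (s + 1) ≠ 0 := by
  refine sub_ne_zero.mpr fun h ↦ ?_
  have := pow_lt_one₀ (norm_nonneg p) hp s.succ_ne_zero
  rw [← norm_pow, ← h, norm_one] at this
  exact this.false

lemma thetaFactor_ne_zero (hp : ‖p‖ < 1) {a : ℂ} (ha : ∀ n : ℤ, a ≠ p ^ n) (s : ℕ) :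
    thetaFactor p a s ≠ 0 := by
  have hleft : 1 - p ^ (s + 1) * a ≠ 0 := fun h ↦ ha (-(s + 1 : ℕ)) <| by
    rw [zpow_neg, zpow_natCast]
    exact eq_inv_of_mul_eq_one_right (sub_eq_zero.mp h).symm
  have hright : 1 - p ^ (s + 1) * a⁻¹ ≠ 0 := fun h ↦ ha (s + 1 : ℕ) <| by
    have h := (sub_eq_zero.mp h).symm
    have ha0 : a ≠ 0 := by rintro rfl; simp at h
    rw [zpow_natCast, ← (mul_inv_eq_one₀ ha0).mp h]
  exact div_ne_zero (mul_ne_zero hleft hright) (pow_ne_zero 2 (one_sub_pow_succ_ne_zero hp s))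

lemma thetaProd_one (hp : ‖p‖ < 1) : thetaProd p 1 = 1 := by
  have h : ∀ s, thetaFactor p 1 s = 1 := fun s ↦ by
    rw [thetaFactor, inv_one, mul_one, ← sq,
      div_self (pow_ne_zero 2 (one_sub_pow_succ_ne_zero hp s))]
  simp [thetaProd, h]

lemma continuousAt_jTheta (hp : ‖p‖ < 1) {a : ℂ} (ha : a ≠ 0) : ContinuousAt (jTheta p) a :=
  (continuousAt_const.sub continuousAt_id).mul (continuousAt_thetaProd hp ha)

lemma jTheta_ne_zero (hp : ‖p‖ < 1) {a : ℂ} (ha : ∀ n : ℤ, a ≠ p ^ n) : jTheta p a ≠ 0 :=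
  mul_ne_zero (sub_ne_zero.mpr (by simpa using (ha 0).symm))
    (thetaProd_ne_zero hp (thetaFactor_ne_zero hp ha))

end ThetaProduct

lemma sub_one_mul_zetaE (p q₁ q₂ : ℂ) {x : ℂ} (hx : x ≠ 1) :
    (x - 1) * zetaE p q₁ q₂ x =
      -(jTheta p (x * q₁) * jTheta p (x * q₂)) / (thetaProd p x * jTheta p (x * (q₁ * q₂))) := by
  rw [zetaE, jTheta_eq_mul_thetaProd p x, mul_assoc, ← div_div, mul_div_assoc', ← neg_sub,
    neg_mul, mul_div_cancel₀ _ (sub_ne_zero.mpr hx.symm), neg_div]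

theorem zetaE_residue_at_one_general (p : ℂ)
    (hp1 : ‖p‖ < 1)
    (q₁ q₂ : ℂ) (hq₁ : q₁ ≠ 0) (hq₂ : q₂ ≠ 0)
    (hq : ∀ n : ℤ, q₁ * q₂ ≠ p ^ n) :
    Tendsto (fun x : ℂ => (x - 1) * zetaE p q₁ q₂ x) (𝓝[≠] 1)
      (𝓝 (-(jTheta p q₁ * jTheta p q₂) / jTheta p (q₁ * q₂))) := by
  have hscaled {c : ℂ} (hc : c ≠ 0) : ContinuousAt (fun x ↦ jTheta p (x * c)) 1 :=
    (continuousAt_jTheta hp1 hc).comp_of_eq (continuousAt_id.mul continuousAt_const) (one_mul c)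
  have hcont : ContinuousAt (fun x ↦
      -(jTheta p (x * q₁) * jTheta p (x * q₂)) / (thetaProd p x * jTheta p (x * (q₁ * q₂)))) 1 :=
    ((hscaled hq₁).mul (hscaled hq₂)).neg.div
      ((continuousAt_thetaProd hp1 one_ne_zero).mul (hscaled (mul_ne_zero hq₁ hq₂)))
      (by simpa [thetaProd_one hp1] using jTheta_ne_zero hp1 hq)
  have hlim := hcont.tendsto.mono_left (nhdsWithin_le_nhds (s := {1}ᶜ))
  simp only [one_mul, thetaProd_one hp1] at hlim
  exact hlim.congr' <| eventually_nhdsWithin_of_forall fun x hx ↦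
    (sub_one_mul_zetaE p q₁ q₂ hx).symm

/-- The residue of `ζ^E` at `x = 1` is `−ϑ(q₁)ϑ(q₂)/ϑ(q)` (where `q = q₁q₂ ∉ p^ℤ`). -/
theorem zetaE_residue_at_one (p : ℂ)
    (hp0 : 0 < ‖p‖) (hp1 : ‖p‖ < 1)
    (q₁ q₂ : ℂ) (hq₁ : q₁ ≠ 0) (hq₂ : q₂ ≠ 0)
    (hq : ∀ n : ℤ, q₁ * q₂ ≠ p ^ n) :
    Tendsto (fun x : ℂ => (x - 1) * zetaE p q₁ q₂ x) (𝓝[≠] 1)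
      (𝓝 (-(jTheta p q₁ * jTheta p q₂) / jTheta p (q₁ * q₂))) :=
  zetaE_residue_at_one_general p hp1 q₁ q₂ hq₁ hq₂ hq
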